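/- arXiv:1212.4212 — 3 statements merged into one kernel-verified Lean document; each statement's English description precedes it below -/
import Mathlib

section
/- Let Σ > 0, X : ℝ → ℂ^{n×p}, M : ℝ → ℂ^{n×p} with M(σ + Σ) = M(σ) for all σ, F ∈ ℂ^{p×p}, and C ∈ ℂ^{p×p}. Suppose X(σ) = M(σ) · exp(σ • F) for all σ, that X(σ + Σ) = X(σ) · C for all σ, and that the only vector v ∈ ℂᵖ satisfying X(σ) v = 0 for all σ ∈ ℝ is v = 0 (i.e. the columns of X are linearly independent as functions). Then C = exp(Σ • F). -/
open NormedSpace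

/-! If `X = M · exp(σ • F)` with `M` periodic, then `X (σ + Σ) = X σ · exp(Σ • F)`, so `X σ · C` and
`X σ · exp(Σ • F)` agree for all `σ`. Linear independence of the columns of `X` cancels `X`. -/

theorem Function.Periodic.mul_exp_smul_add {m n 𝕂 : Type*} [Fintype n] [DecidableEq n] [RCLike 𝕂]
    {M : ℝ → Matrix m n 𝕂} {per : ℝ} (hM : Function.Periodic M per) (F : Matrix n n 𝕂) (σ : ℝ) :
    M (σ + per) * exp ((σ + per) • F) = M σ * exp (σ • F) * exp (per • F) := by
  have hcomm : _root_.Commute (σ • F) (per • F) :=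
    ((_root_.Commute.refl F).smul_right per).smul_left σ
  rw [hM σ, add_smul, Matrix.exp_add_of_commute _ _ hcomm, Matrix.mul_assoc]

open Matrix in
theorem Matrix.eq_of_forall_mul_eq_mul {ι m n R : Type*} [Fintype n] [Ring R]
    {X : ι → Matrix m n R} (hX : ∀ v : n → R, (∀ i, X i *ᵥ v = 0) → v = 0)
    {A B : Matrix n n R} (h : ∀ i, X i * A = X i * B) : A = B := by
  refine ext_iff_mulVec.2 fun v => sub_eq_zero.1 ?_
  rw [← sub_mulVec]
  refine hX _ fun i => ?_
  rw [mulVec_mulVec, Matrix.mul_sub, h i, sub_self, zero_mulVec]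

theorem monodromy_matrix_eq_exp_general (n p : ℕ) (per : ℝ)
    (X M : ℝ → Matrix (Fin n) (Fin p) ℂ)
    (F C : Matrix (Fin p) (Fin p) ℂ)
    (hM : ∀ σ : ℝ, M (σ + per) = M σ)
    (hXM : ∀ σ : ℝ, X σ = M σ * exp (σ • F))
    (hXC : ∀ σ : ℝ, X (σ + per) = X σ * C)
    (hindep : ∀ v : Fin p → ℂ, (∀ σ : ℝ, (X σ).mulVec v = 0) → v = 0) :
    C = exp (per • F) := by
  refine Matrix.eq_of_forall_mul_eq_mul hindep fun σ => ?_
  rw [← hXC, hXM, hXM, Function.Periodic.mul_exp_smul_add hM]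

/-- Identification of the monodromy matrix: if `X(σ) = M(σ) · exp(σ • F)` with `M`
Σ-periodic, `X(σ + Σ) = X(σ) · C` for a constant matrix `C`, and the columns of `X` are
linearly independent as functions (the only `v` with `X(σ) v = 0` for all `σ` is `v = 0`),
then `C = exp(Σ • F)`. -/
theorem monodromy_matrix_eq_exp (n p : ℕ) (per : ℝ) (hper : 0 < per)
    (X M : ℝ → Matrix (Fin n) (Fin p) ℂ)
    (F C : Matrix (Fin p) (Fin p) ℂ)
    (hM : ∀ σ : ℝ, M (σ + per) = M σ)
    (hXM : ∀ σ : ℝ, X σ = M σ * exp (σ • F))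
    (hXC : ∀ σ : ℝ, X (σ + per) = X σ * C)
    (hindep : ∀ v : Fin p → ℂ, (∀ σ : ℝ, (X σ).mulVec v = 0) → v = 0) :
    C = exp (per • F) :=
  monodromy_matrix_eq_exp_general n p per X M F C hM hXM hXC hindep
end

section
/- Let Σ > 0, let M : ℝ → ℂ^{n×p} satisfy M(σ + Σ) = M(σ) for all σ, let F, Q ∈ ℂ^{p×p} and let D ∈ ℂ^{p×p} be the diagonal matrix with diagonal entries λ : Fin p → ℂ, and suppose F · Q = Q · D. Define X(σ) = M(σ) · exp(σ • F). Then for every j ∈ Fin p, the function z_j(σ) := X(σ) · (Q e_j) satisfies z_j(σ) = exp(λ_j σ) • r_j(σ) for all σ, where r_j(σ) := M(σ) · (Q e_j) is Σ-periodic. In particular every such solution has the Floquet normal form: a Σ-periodic vector function times the exponential e^{λ_j σ}. -/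
open NormedSpace

/-!
Since `F Q = Q D`, every power satisfies `Fᵏ Q = Q Dᵏ`, so summing the exponential series gives
`exp (σ • F) Q = Q exp (σ • D)`, and `exp (σ • D)` is diagonal with entries `e^{λ_j σ}`. Reading
off the `j`-th column, `exp (σ • F)` multiplies the column `Q e_j` by `e^{λ_j σ}`, so
`X(σ) Q e_j = e^{λ_j σ} M(σ) Q e_j`, and `M(σ) Q e_j` inherits the period of `M`.
-/

namespace Matrix

variable {m : Type*} [Fintype m] [DecidableEq m]

theorem semiconjBy_exp {𝔸 : Type*} [NormedRing 𝔸] [NormedAlgebra ℚ 𝔸] [CompleteSpace 𝔸]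
    {U A B : Matrix m m 𝔸} (h : SemiconjBy U A B) : SemiconjBy U (exp A) (exp B) := by
  let : NormedRing (Matrix m m 𝔸) := Matrix.linftyOpNormedRing
  let : NormedAlgebra ℚ (Matrix m m 𝔸) := Matrix.linftyOpNormedAlgebra
  refine @SemiconjBy.exp_right _ _ _ ?_ _ _ _ h
  -- the operator-norm uniformity is definitionally the product uniformity
  show CompleteSpace (m → m → 𝔸)
  infer_instance

theorem exp_smul_diagonal (t : ℂ) (lam : m → ℂ) :
    exp (t • diagonal lam) = diagonal fun i => Complex.exp (lam i * t) := by
  rw [← diagonal_smul, exp_diagonal]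
  congr 1
  funext i
  rw [Pi.coe_exp, Complex.exp_eq_exp_ℂ, Pi.smul_apply, smul_eq_mul, mul_comm]

theorem exp_smul_mul_eq_mul_diagonal_exp {F Q : Matrix m m ℂ} {lam : m → ℂ}
    (hFQ : F * Q = Q * diagonal lam) (t : ℂ) :
    exp (t • F) * Q = Q * diagonal fun i => Complex.exp (lam i * t) := by
  have hconj : SemiconjBy Q (t • diagonal lam) (t • F) := by
    rw [SemiconjBy, Matrix.mul_smul, smul_mul, hFQ]
  rw [← exp_smul_diagonal, (semiconjBy_exp hconj).eq]

theorem exp_smul_mulVec_col_of_mul_eq_mul_diagonal {F Q : Matrix m m ℂ} {lam : m → ℂ}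
    (hFQ : F * Q = Q * diagonal lam) (t : ℂ) (j : m) :
    exp (t • F) *ᵥ Q.col j = Complex.exp (lam j * t) • Q.col j := by
  ext i
  have hentry := congrFun (congrFun (exp_smul_mul_eq_mul_diagonal_exp hFQ t) i) j
  rw [mul_diagonal, mul_apply] at hentry
  simpa only [mulVec, dotProduct, col_apply, Pi.smul_apply, smul_eq_mul, mul_comm] using hentry

end Matrix

theorem floquet_normal_form_general (n p : ℕ) (per : ℝ)
    (M : ℝ → Matrix (Fin n) (Fin p) ℂ)
    (hM : ∀ σ : ℝ, M (σ + per) = M σ)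
    (F Q : Matrix (Fin p) (Fin p) ℂ) (lam : Fin p → ℂ)
    (hFQ : F * Q = Q * Matrix.diagonal lam)
    (X : ℝ → Matrix (Fin n) (Fin p) ℂ)
    (hX : ∀ σ : ℝ, X σ = M σ * exp (σ • F)) :
    ∀ j : Fin p,
      (∀ σ : ℝ, (M (σ + per)).mulVec (Q.mulVec (Pi.single j 1)) =
        (M σ).mulVec (Q.mulVec (Pi.single j 1))) ∧
      (∀ σ : ℝ, (X σ).mulVec (Q.mulVec (Pi.single j 1)) =
        Complex.exp (lam j * σ) • (M σ).mulVec (Q.mulVec (Pi.single j 1))) := by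
  intro j
  refine ⟨fun σ => by rw [hM σ], fun σ => ?_⟩
  rw [hX, ← Matrix.mulVec_mulVec, Matrix.mulVec_single_one, ← Complex.coe_smul,
    Matrix.exp_smul_mulVec_col_of_mul_eq_mul_diagonal hFQ, Matrix.mulVec_smul]

/-- Floquet normal form of the solutions: if `M` is Σ-periodic, `F Q = Q D` with
`D = diagonal λ`, and `X(σ) = M(σ) · exp(σ • F)`, then for each `j` the solution
`z_j(σ) = X(σ) (Q e_j)` takes the form `z_j(σ) = e^{λ_j σ} • r_j(σ)` where
`r_j(σ) = M(σ) (Q e_j)` is Σ-periodic. -/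
theorem floquet_normal_form (n p : ℕ) (per : ℝ) (hper : 0 < per)
    (M : ℝ → Matrix (Fin n) (Fin p) ℂ)
    (hM : ∀ σ : ℝ, M (σ + per) = M σ)
    (F Q : Matrix (Fin p) (Fin p) ℂ) (lam : Fin p → ℂ)
    (hFQ : F * Q = Q * Matrix.diagonal lam)
    (X : ℝ → Matrix (Fin n) (Fin p) ℂ)
    (hX : ∀ σ : ℝ, X σ = M σ * exp (σ • F)) :
    ∀ j : Fin p,
      (∀ σ : ℝ, (M (σ + per)).mulVec (Q.mulVec (Pi.single j 1)) =
        (M σ).mulVec (Q.mulVec (Pi.single j 1))) ∧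
      (∀ σ : ℝ, (X σ).mulVec (Q.mulVec (Pi.single j 1)) =
        Complex.exp (lam j * σ) • (M σ).mulVec (Q.mulVec (Pi.single j 1))) :=
  floquet_normal_form_general n p per M hM F Q lam hFQ X hX
end

section
/- Let λ : Fin 3 → ℂ and f : ℝ³ → ℂ. Suppose that for each i ∈ {1,2,3} there exists a function g_i : ℝ³ → ℂ that does not depend on the i-th coordinate (i.e. g_i(x) = g_i(y) whenever x_j = y_j for all j ≠ i) such that f(x) = g_i(x) · exp(λ_i x_i) for all x ∈ ℝ³. Then f(x) = f(0) · exp(∑_i λ_i x_i) for all x ∈ ℝ³. That is, if a function factorizes as an exponential in each coordinate separately, it is globally a pure exponential times a constant. -/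
/-! Each factorization says that zeroing the `i`-th coordinate divides `f` by `exp (λ_i x_i)`.
Zeroing the coordinates one at a time carries `x` to `0` and collects the exponentials. -/

open Finset

variable {ι : Type*} [DecidableEq ι]

theorem apply_eq_apply_update_zero_mul_exp {f g : (ι → ℝ) → ℂ} {c : ℂ} {i : ι}
    (hg : ∀ x y : ι → ℝ, (∀ j, j ≠ i → x j = y j) → g x = g y)
    (hf : ∀ x, f x = g x * Complex.exp (c * (x i : ℝ))) (x : ι → ℝ) :
    f x = f (Function.update x i 0) * Complex.exp (c * (x i : ℝ)) := by
  have hgx : g (Function.update x i 0) = g x :=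
    hg _ _ fun j hj => Function.update_of_ne hj 0 x
  rw [hf x, hf (Function.update x i 0), hgx, Function.update_self]
  simp

theorem apply_eq_apply_zero_mul_exp_sum_of_forall_notMem {f : (ι → ℝ) → ℂ} {lam : ι → ℂ}
    (hf : ∀ i x, f x = f (Function.update x i 0) * Complex.exp (lam i * (x i : ℝ)))
    (s : Finset ι) {x : ι → ℝ} (hx : ∀ i ∉ s, x i = 0) :
    f x = f 0 * Complex.exp (∑ i ∈ s, lam i * (x i : ℝ)) := by
  induction s using Finset.induction_on generalizing x with
  | empty =>
    have hx0 : x = 0 := funext fun i => hx i (notMem_empty i)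
    simp [hx0]
  | insert a s has ih =>
    have hupd : ∀ i ∉ s, Function.update x a 0 i = 0 := fun i hi => by
      by_cases hia : i = a
      · simp [hia]
      · rw [Function.update_of_ne hia]
        exact hx i (by simp [hia, hi])
    have hsum : ∑ i ∈ s, lam i * (Function.update x a 0 i : ℂ) = ∑ i ∈ s, lam i * (x i : ℂ) :=
      sum_congr rfl fun i hi => by rw [Function.update_of_ne (ne_of_mem_of_not_mem hi has)]
    rw [hf a x, ih hupd, hsum, sum_insert has, Complex.exp_add]
    ring

theorem apply_eq_apply_zero_mul_exp_sum [Fintype ι] {f : (ι → ℝ) → ℂ} {lam : ι → ℂ}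
    (hf : ∀ i x, f x = f (Function.update x i 0) * Complex.exp (lam i * (x i : ℝ)))
    (x : ι → ℝ) :
    f x = f 0 * Complex.exp (∑ i, lam i * (x i : ℝ)) :=
  apply_eq_apply_zero_mul_exp_sum_of_forall_notMem hf univ fun i hi => absurd (mem_univ i) hi

/-- Consistency of the three one-dimensional factorizations: if for each coordinate `i`
the function `f : ℝ³ → ℂ` factorizes as `f(x) = g_i(x) · exp(λ_i x_i)` where `g_i` does
not depend on the `i`-th coordinate, then `f(x) = f(0) · exp(∑ i, λ_i x_i)`:
`f` is globally a pure exponential times a constant. -/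
theorem coordinatewise_exponential_factorization
    (lam : Fin 3 → ℂ) (f : (Fin 3 → ℝ) → ℂ)
    (h : ∀ i : Fin 3, ∃ g : (Fin 3 → ℝ) → ℂ,
      (∀ x y : Fin 3 → ℝ, (∀ j : Fin 3, j ≠ i → x j = y j) → g x = g y) ∧
      ∀ x : Fin 3 → ℝ, f x = g x * Complex.exp (lam i * (x i : ℝ))) :
    ∀ x : Fin 3 → ℝ, f x = f 0 * Complex.exp (∑ i : Fin 3, lam i * (x i : ℝ)) := by
  refine apply_eq_apply_zero_mul_exp_sum fun i => ?_
  obtain ⟨g, hg, hf⟩ := h i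
  exact apply_eq_apply_update_zero_mul_exp hg hf
end
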